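/- Let r ≥ 2, s ≥ 2 be integers and H a nonempty r-uniform hypergraph with s(H) = s. Define γ_{s,H} as the minimum over nonempty subhypergraphs G ⊆ H with |∂_{s−1}(G)| < |∂_{s−1}(H)| of (|E(H)| − |E(G)| − 1)/(|∂_{s−1}(H)| − |∂_{s−1}(G)|). Then γ_{s,H} equals the minimum over nonempty 𝒮 ⊆ ∂_{s−1}(H) with |∂_{s−1}(H) \ 𝒮| ≥ C(r, s−1) of (|{e ∈ E(H) : some (s−1)-subset of e lies in 𝒮}| − 1)/|𝒮|. -/
import Mathlib


open Finset

/-- The `m`-shadow of a hypergraph: all `m`-element vertex subsets contained in some edge. -/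
def hyperShadow {α : Type*} [DecidableEq α] (m : ℕ) (H : Finset (Finset α)) :
    Finset (Finset α) :=
  H.sup fun e => e.powersetCard m

/-- The sparseness of a hypergraph. -/
noncomputable def spars {α : Type*} [DecidableEq α] (H : Finset (Finset α)) : ℕ :=
  sInf {m | ∃ S : Finset α, S.card = m ∧ (H.filter fun e => S ⊆ e).card = 1}

/-- The quantity `γ_{s,H}`. -/
noncomputable def gammaVal {α : Type*} [DecidableEq α]
    (s : ℕ) (H : Finset (Finset α)) : ℝ :=
  sInf {x : ℝ | ∃ G : Finset (Finset α), G ⊆ H ∧ G.Nonempty ∧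
    (hyperShadow (s - 1) G).card < (hyperShadow (s - 1) H).card ∧
    x = ((H.card : ℝ) - G.card - 1) /
      ((hyperShadow (s - 1) H).card - (hyperShadow (s - 1) G).card)}

lemma mem_hyperShadow {α : Type*} [DecidableEq α] {m : ℕ} {H : Finset (Finset α)}
    {U : Finset α} :
    U ∈ hyperShadow m H ↔ ∃ e ∈ H, U ⊆ e ∧ U.card = m := by
  simp [hyperShadow, Finset.mem_sup, Finset.mem_powersetCard]

lemma hyperShadow_mono {α : Type*} [DecidableEq α] {m : ℕ} {G H : Finset (Finset α)}
    (h : G ⊆ H) : hyperShadow m G ⊆ hyperShadow m H :=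
  Finset.le_iff_subset.mp (Finset.sup_mono h)

theorem gamma_alternative_form {α : Type*} [DecidableEq α]
    (r s : ℕ) (hr : 2 ≤ r) (hs : 2 ≤ s)
    (H : Finset (Finset α)) (hne : H.Nonempty)
    (hunif : ∀ e ∈ H, e.card = r)
    (hsp : spars H = s) :
    gammaVal s H =
      sInf {x : ℝ | ∃ S : Finset (Finset α), S.Nonempty ∧ S ⊆ hyperShadow (s - 1) H ∧
        r.choose (s - 1) ≤ ((hyperShadow (s - 1) H) \ S).card ∧
        x = (((H.filter fun e => ∃ U ∈ S, U ⊆ e).card : ℝ) - 1) / S.card} := by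
  classical
  have hs1 : 1 ≤ s - 1 := by omega
  rw [spars] at hsp
  -- the sparseness set is nonempty and `s` belongs to it
  have hsetne : {m | ∃ S : Finset α, S.card = m ∧ (H.filter fun e => S ⊆ e).card = 1}.Nonempty := by
    by_contra h
    rw [Set.not_nonempty_iff_eq_empty] at h
    rw [h, Nat.sInf_empty] at hsp
    omega
  have hmem := Nat.sInf_mem hsetne
  rw [hsp] at hmem
  obtain ⟨T, hTcard, hTfil⟩ := hmem
  have hnot1 : ∀ m < s,
      m ∉ {m | ∃ S : Finset α, S.card = m ∧ (H.filter fun e => S ⊆ e).card = 1} :=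
    fun m hm => Nat.notMem_of_lt_sInf (by rw [hsp]; exact hm)
  -- s ≤ r
  have hsr : s ≤ r := by
    have hfne : (H.filter fun e => T ⊆ e).Nonempty := by
      rw [← card_pos, hTfil]; norm_num
    obtain ⟨e, he⟩ := hfne
    rw [mem_filter] at he
    calc s = T.card := hTcard.symm
      _ ≤ e.card := card_le_card he.2
      _ = r := hunif e he.1
  -- H has at least two edges
  have hH2 : 2 ≤ H.card := by
    by_contra h
    push_neg at h
    obtain ⟨e, he⟩ := hne
    have hHe : H = {e} := by
      apply Finset.eq_singleton_iff_unique_mem.mpr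
      refine ⟨he, fun f hf => ?_⟩
      by_contra hfe
      have := Finset.one_lt_card.mpr ⟨f, hf, e, he, hfe⟩
      omega
    have hec : e.card = r := hunif e he
    obtain ⟨v, hv⟩ : e.Nonempty := by rw [← card_pos, hec]; omega
    refine hnot1 1 (by omega) ⟨{v}, card_singleton v, ?_⟩
    rw [hHe, filter_singleton, if_pos (singleton_subset_iff.mpr hv), card_singleton]
  -- shadow facts
  have hshade : ∀ e ∈ H, e.powersetCard (s-1) ⊆ hyperShadow (s-1) H := by
    intro e he U hU
    rw [mem_powersetCard] at hU
    exact mem_hyperShadow.mpr ⟨e, he, hU.1, hU.2⟩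
  have hchoose : ∀ e ∈ H, (e.powersetCard (s-1)).card = r.choose (s-1) := by
    intro e he
    rw [card_powersetCard, hunif e he]
  have hkey : r.choose (s-1) < (hyperShadow (s-1) H).card := by
    obtain ⟨e, he, f, hf, hef⟩ := Finset.one_lt_card.mp hH2
    have hfe : ¬ f ⊆ e := fun h =>
      hef (Finset.eq_of_subset_of_card_le h (by rw [hunif e he, hunif f hf])).symm
    obtain ⟨v, hvf, hve⟩ : ∃ v ∈ f, v ∉ e := by
      by_contra h
      push_neg at h
      exact hfe h
    obtain ⟨U, hvU, hUf, hUcard⟩ := Finset.exists_subsuperset_card_eq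
      (Finset.singleton_subset_iff.mpr hvf) (by simpa using hs1)
      (by rw [hunif f hf]; omega)
    have hUmem : U ∈ hyperShadow (s-1) H := mem_hyperShadow.mpr ⟨f, hf, hUf, hUcard⟩
    have hUnot : U ∉ e.powersetCard (s-1) := by
      rw [mem_powersetCard]
      rintro ⟨hUe, -⟩
      exact hve (hUe (hvU (mem_singleton_self v)))
    calc r.choose (s-1) = (e.powersetCard (s-1)).card := (hchoose e he).symm
      _ < (hyperShadow (s-1) H).card :=
        card_lt_card (Finset.ssubset_iff_of_subset (hshade e he) |>.mpr ⟨U, hUmem, hUnot⟩)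
  obtain ⟨e0, he0⟩ := hne
  have hshadow0 : hyperShadow (s-1) ({e0} : Finset (Finset α)) = e0.powersetCard (s-1) := by
    simp [hyperShadow]
  -- the two sets
  set A : Set ℝ := {x : ℝ | ∃ G : Finset (Finset α), G ⊆ H ∧ G.Nonempty ∧
    (hyperShadow (s - 1) G).card < (hyperShadow (s - 1) H).card ∧
    x = ((H.card : ℝ) - G.card - 1) /
      ((hyperShadow (s - 1) H).card - (hyperShadow (s - 1) G).card)} with hA
  set B : Set ℝ := {x : ℝ | ∃ S : Finset (Finset α), S.Nonempty ∧ S ⊆ hyperShadow (s - 1) H ∧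
    r.choose (s - 1) ≤ ((hyperShadow (s - 1) H) \ S).card ∧
    x = (((H.filter fun e => ∃ U ∈ S, U ⊆ e).card : ℝ) - 1) / S.card} with hB
  -- A is nonempty
  have hAne : A.Nonempty := by
    refine ⟨_, ⟨{e0}, singleton_subset_iff.mpr he0, singleton_nonempty e0, ?_, rfl⟩⟩
    rw [hshadow0, hchoose e0 he0]
    exact hkey
  -- B is nonempty
  have hBne : B.Nonempty := by
    refine ⟨_, ⟨hyperShadow (s-1) H \ e0.powersetCard (s-1), ?_, sdiff_subset, ?_, rfl⟩⟩
    · rw [← card_pos, card_sdiff_of_subset (hshade e0 he0), hchoose e0 he0]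
      omega
    · rw [sdiff_sdiff_right_self]
      have : hyperShadow (s-1) H ⊓ e0.powersetCard (s-1) = e0.powersetCard (s-1) :=
        inf_eq_right.mpr (hshade e0 he0)
      rw [this, hchoose e0 he0]
  -- A is bounded below by 0
  have hAbdd : ∀ x ∈ A, (0:ℝ) ≤ x := by
    rintro x ⟨G, hGH, hGne, hGlt, rfl⟩
    have hGcard : G.card < H.card := by
      rcases lt_or_eq_of_le (card_le_card hGH) with h | h
      · exact h
      · exact absurd (by rw [Finset.eq_of_subset_of_card_le hGH h.ge]) hGlt.ne
    apply div_nonneg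
    · have : (G.card : ℝ) + 1 ≤ H.card := by exact_mod_cast hGcard
      linarith
    · have : ((hyperShadow (s-1) G).card : ℝ) < (hyperShadow (s-1) H).card := by
        exact_mod_cast hGlt
      linarith
  have hAbdd' : BddBelow A := ⟨0, hAbdd⟩
  -- B is bounded below by 0
  have hBbdd : ∀ x ∈ B, (0:ℝ) ≤ x := by
    rintro x ⟨S, hSne, hSsub, hScard, rfl⟩
    have hhit : 1 ≤ (H.filter fun e => ∃ U ∈ S, U ⊆ e).card := by
      obtain ⟨U, hU⟩ := hSne
      obtain ⟨e, he, hUe, -⟩ := mem_hyperShadow.mp (hSsub hU)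
      exact card_pos.mpr ⟨e, mem_filter.mpr ⟨he, U, hU, hUe⟩⟩
    apply div_nonneg
    · have : (1:ℝ) ≤ (H.filter fun e => ∃ U ∈ S, U ⊆ e).card := by exact_mod_cast hhit
      linarith
    · exact Nat.cast_nonneg _
  have hBbdd' : BddBelow B := ⟨0, hBbdd⟩
  rw [gammaVal, ← hA]
  apply le_antisymm
  · -- sInf A ≤ sInf B
    refine le_csInf hBne ?_
    rintro x ⟨S, hSne, hSsub, hScard, rfl⟩
    have hSpos : 0 < S.card := card_pos.mpr hSne
    have hhit : 1 ≤ (H.filter fun e => ∃ U ∈ S, U ⊆ e).card := by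
      obtain ⟨U, hU⟩ := hSne
      obtain ⟨e, he, hUe, -⟩ := mem_hyperShadow.mp (hSsub hU)
      exact card_pos.mpr ⟨e, mem_filter.mpr ⟨he, U, hU, hUe⟩⟩
    have hSH : S.card ≤ (hyperShadow (s-1) H).card := card_le_card hSsub
    have hSdiff : ((hyperShadow (s-1) H) \ S).card = (hyperShadow (s-1) H).card - S.card :=
      card_sdiff_of_subset hSsub
    by_cases hGne : (H.filter fun e => ¬ ∃ U ∈ S, U ⊆ e).Nonempty
    · set G := H.filter fun e => ¬ ∃ U ∈ S, U ⊆ e with hG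
      have hsub : hyperShadow (s-1) G ⊆ (hyperShadow (s-1) H) \ S := by
        intro U hU
        obtain ⟨e, he, hUe, hUc⟩ := mem_hyperShadow.mp hU
        rw [hG, mem_filter] at he
        exact mem_sdiff.mpr ⟨mem_hyperShadow.mpr ⟨e, he.1, hUe, hUc⟩,
          fun hUS => he.2 ⟨U, hUS, hUe⟩⟩
      have hcardsub : (hyperShadow (s-1) G).card + S.card ≤ (hyperShadow (s-1) H).card := by
        have h1 := card_le_card hsub
        omega
      have hGH : (H.filter fun e => ∃ U ∈ S, U ⊆ e).card + G.card = H.card := by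
        rw [hG]
        exact card_filter_add_card_filter_not _
      refine csInf_le_of_le hAbdd' ⟨G, filter_subset _ _, hGne, by omega, rfl⟩ ?_
      have hnum : ((H.card : ℝ) - G.card - 1)
          = ((H.filter fun e => ∃ U ∈ S, U ⊆ e).card : ℝ) - 1 := by
        have : ((H.filter fun e => ∃ U ∈ S, U ⊆ e).card : ℝ) + G.card = H.card := by
          exact_mod_cast hGH
        linarith
      rw [hnum]
      apply div_le_div_of_nonneg_left
      · have : (1:ℝ) ≤ (H.filter fun e => ∃ U ∈ S, U ⊆ e).card := by exact_mod_cast hhit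
        linarith
      · exact_mod_cast hSpos
      · have : ((hyperShadow (s-1) G).card : ℝ) + S.card ≤ (hyperShadow (s-1) H).card := by
          exact_mod_cast hcardsub
        linarith
    · -- every edge is hit; use G = {e0}
      have hall : (H.filter fun e => ∃ U ∈ S, U ⊆ e).card = H.card := by
        have h0 : (H.filter fun e => ¬ ∃ U ∈ S, U ⊆ e).card = 0 := by
          rw [card_eq_zero]
          exact not_nonempty_iff_eq_empty.mp hGne
        have := card_filter_add_card_filter_not (s := H)
          (p := fun e => ∃ U ∈ S, U ⊆ e)
        omega
      refine csInf_le_of_le hAbdd'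
        ⟨{e0}, singleton_subset_iff.mpr he0, singleton_nonempty e0, ?_, rfl⟩ ?_
      · rw [hshadow0, hchoose e0 he0]
        exact hkey
      · rw [hall, hshadow0, hchoose e0 he0, card_singleton]
        have hd : (r.choose (s-1) : ℝ) + S.card ≤ (hyperShadow (s-1) H).card := by
          have : r.choose (s-1) + S.card ≤ (hyperShadow (s-1) H).card := by omega
          exact_mod_cast this
        have hH2' : (2:ℝ) ≤ H.card := by exact_mod_cast hH2
        apply div_le_div₀
        · linarith
        · linarith
        · exact_mod_cast hSpos
        · linarith
  · -- sInf B ≤ sInf A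
    refine le_csInf hAne ?_
    rintro x ⟨G, hGH, hGne, hGlt, rfl⟩
    set S := hyperShadow (s-1) H \ hyperShadow (s-1) G with hS
    have hGsub : hyperShadow (s-1) G ⊆ hyperShadow (s-1) H := hyperShadow_mono hGH
    have hScard : S.card = (hyperShadow (s-1) H).card - (hyperShadow (s-1) G).card := by
      rw [hS]
      exact card_sdiff_of_subset hGsub
    have hSne : S.Nonempty := by
      rw [← card_pos, hScard]
      omega
    have hback : (hyperShadow (s-1) H) \ S = hyperShadow (s-1) G := by
      rw [hS, sdiff_sdiff_right_self]
      exact inf_eq_right.mpr hGsub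
    obtain ⟨eG, heG⟩ := hGne
    have hCle : r.choose (s-1) ≤ ((hyperShadow (s-1) H) \ S).card := by
      rw [hback]
      calc r.choose (s-1) = (eG.powersetCard (s-1)).card := (hchoose eG (hGH heG)).symm
        _ ≤ (hyperShadow (s-1) G).card := card_le_card (by
            intro U hU
            rw [mem_powersetCard] at hU
            exact mem_hyperShadow.mpr ⟨eG, heG, hU.1, hU.2⟩)
    -- hit edges avoid G
    have hhitsub : (H.filter fun e => ∃ U ∈ S, U ⊆ e) ⊆ H \ G := by
      intro e he
      rw [mem_filter] at he
      obtain ⟨he1, U, hUS, hUe⟩ := he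
      refine mem_sdiff.mpr ⟨he1, fun heG' => ?_⟩
      have hUS' := hUS
      rw [hS, mem_sdiff] at hUS'
      obtain ⟨hUH, hUG⟩ := hUS'
      obtain ⟨-, -, -, hUc⟩ := mem_hyperShadow.mp hUH
      exact hUG (mem_hyperShadow.mpr ⟨e, heG', hUe, hUc⟩)
    have hhitle : (H.filter fun e => ∃ U ∈ S, U ⊆ e).card ≤ H.card - G.card := by
      calc (H.filter fun e => ∃ U ∈ S, U ⊆ e).card ≤ (H \ G).card := card_le_card hhitsub
        _ = H.card - G.card := card_sdiff_of_subset hGH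
    refine csInf_le_of_le hBbdd' ⟨S, hSne, sdiff_subset, hCle, rfl⟩ ?_
    have hGHcard : G.card ≤ H.card := card_le_card hGH
    have hden : (S.card : ℝ) = ((hyperShadow (s-1) H).card : ℝ) - (hyperShadow (s-1) G).card := by
      rw [hScard]
      have := card_le_card hGsub
      push_cast [Nat.cast_sub this]
      ring
    rw [hden]
    have hDpos : (0:ℝ) < ((hyperShadow (s-1) H).card : ℝ) - (hyperShadow (s-1) G).card := by
      have : ((hyperShadow (s-1) G).card : ℝ) < (hyperShadow (s-1) H).card := by
        exact_mod_cast hGlt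
      linarith
    have hnumle : ((H.filter fun e => ∃ U ∈ S, U ⊆ e).card : ℝ) - 1
        ≤ (H.card : ℝ) - G.card - 1 := by
      have h1 : ((H.filter fun e => ∃ U ∈ S, U ⊆ e).card : ℝ) ≤ (H.card : ℝ) - G.card := by
        have := hhitle
        have h2 : ((H \ G).card : ℝ) = (H.card : ℝ) - G.card := by
          rw [card_sdiff_of_subset hGH, Nat.cast_sub hGHcard]
        calc ((H.filter fun e => ∃ U ∈ S, U ⊆ e).card : ℝ) ≤ ((H \ G).card : ℝ) := by
              exact_mod_cast card_le_card hhitsub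
          _ = (H.card : ℝ) - G.card := h2
      linarith
    gcongr
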